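/- arXiv:1311.4941 — 3 statements merged into one kernel-verified Lean document; each statement's English description precedes it below -/
import Mathlib

section
/- Let λ > 0 and let X be a random variable whose law is the exponential distribution with rate λ. Then for every l ∈ ℤ, the probability that the integer ⌊X/2^l⌋ is odd equals 1/(1 + e^{λ·2^l}). (In other words, the l-th binary digit of X is Bernoulli with parameter 1/(1+e^{λ·2^l}).) -/
/-!
Dividing by `2 ^ l` turns the exponential law of rate `λ` into the one of rate `c = λ 2 ^ l`, so
only the digit `⌊Y⌋ mod 2` of `Y ~ Exp(c)` matters. It is `1` exactly on the intervals
`[2k + 1, 2k + 2)`, `k ∈ ℕ`, of masses `u ^ (2k + 1) - u ^ (2k + 2)` with `u = e^{-c}`, and this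
geometric series sums to `u / (1 + u) = 1 / (1 + e^c)`.
-/

open MeasureTheory ProbabilityTheory Real Set

namespace ProbabilityTheory

instance (r : ℝ) : NullSingletonClass (expMeasure r) :=
  ⟨fun x => withDensity_absolutelyContinuous volume _ (measure_singleton x)⟩

variable {r : ℝ}

lemma expMeasure_Iic_zero (hr : 0 < r) : expMeasure r (Iic 0) = 0 := by
  have := isProbabilityMeasure_expMeasure hr
  simp [← ofReal_cdf, cdf_expMeasure_eq hr]

lemma expMeasure_Ico (hr : 0 < r) {a b : ℝ} (ha : 0 ≤ a) (hb : 0 ≤ b) :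
    expMeasure r (Ico a b) = ENNReal.ofReal (exp (-(r * a)) - exp (-(r * b))) := by
  have := isProbabilityMeasure_expMeasure hr
  rw [measure_congr Ico_ae_eq_Ioc, ← measure_cdf (expMeasure r), StieltjesFunction.measure_Ioc,
    cdf_expMeasure_eq hr, cdf_expMeasure_eq hr, if_pos ha, if_pos hb, sub_sub_sub_cancel_left]

lemma expMeasure_map_div_const (hr : 0 < r) {d : ℝ} (hd : 0 < d) :
    (expMeasure r).map (· / d) = expMeasure (r * d) := by
  have := isProbabilityMeasure_expMeasure hr
  have := isProbabilityMeasure_expMeasure (mul_pos hr hd)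
  have := Measure.isProbabilityMeasure_map (μ := expMeasure r) (f := (· / d)) (by fun_prop)
  refine Measure.eq_of_cdf _ _ (StieltjesFunction.ext fun x => ?_)
  have hpre : (· / d) ⁻¹' Iic x = Iic (x * d) := by ext y; exact div_le_iff₀ hd
  rw [cdf_eq_real, map_measureReal_apply (by fun_prop) measurableSet_Iic, hpre,
    ← cdf_eq_real, cdf_expMeasure_eq hr, cdf_expMeasure_eq (mul_pos hr hd)]
  simp only [mul_nonneg_iff_of_pos_right hd, mul_assoc, mul_comm d x]

end ProbabilityTheory

lemma hasSum_pow_odd_sub_pow_even {u : ℝ} (h0 : 0 ≤ u) (h1 : u < 1) :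
    HasSum (fun k : ℕ => u ^ (2 * k + 1) - u ^ (2 * k + 2)) (u / (1 + u)) := by
  have hterm : (fun k : ℕ => u ^ (2 * k + 1) - u ^ (2 * k + 2)) =
      fun k => u * (1 - u) * (u ^ 2) ^ k := by
    funext k; ring
  have hsum : u * (1 - u) * (1 - u ^ 2)⁻¹ = u / (1 + u) := by
    have : 1 - u ≠ 0 := (sub_pos.2 h1).ne'
    rw [show 1 - u ^ 2 = (1 - u) * (1 + u) by ring]
    field_simp
  rw [hterm, ← hsum]
  exact (hasSum_geometric_of_lt_one (sq_nonneg u) (by nlinarith)).mul_left _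

lemma setOf_odd_floor_inter_Ici {α : Type*} [Ring α] [LinearOrder α] [IsStrictOrderedRing α]
    [FloorRing α] :
    {y : α | Odd ⌊y⌋} ∩ Ici 0 = ⋃ k : ℕ, Int.floor ⁻¹' {2 * (k : ℤ) + 1} := by
  ext y
  simp only [mem_inter_iff, mem_ofPred_eq, mem_Ici, mem_iUnion, mem_preimage, mem_singleton_iff,
    ← Int.floor_nonneg (a := y)]
  constructor
  · rintro ⟨⟨m, hm⟩, h⟩
    exact ⟨m.toNat, by omega⟩
  · rintro ⟨k, hk⟩
    exact ⟨⟨k, hk⟩, by omega⟩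

lemma expMeasure_setOf_odd_floor {c : ℝ} (hc : 0 < c) :
    expMeasure c {y | Odd ⌊y⌋} = ENNReal.ofReal (1 / (1 + exp c)) := by
  set u := exp (-c) with hu
  have hu0 : 0 ≤ u := (exp_pos _).le
  have hu1 : u < 1 := exp_lt_one_iff.2 (neg_lt_zero.2 hc)
  have hneg : expMeasure c (Ici 0)ᶜ = 0 :=
    measure_mono_null (by simp) (expMeasure_Iic_zero hc)
  have hdisj : Pairwise (Function.onFun Disjoint fun k : ℕ =>
      (Int.floor : ℝ → ℤ) ⁻¹' {2 * (k : ℤ) + 1}) :=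
    fun i j hij => (disjoint_singleton.2 (by omega)).preimage _
  have hpiece (k : ℕ) : expMeasure c ((Int.floor : ℝ → ℤ) ⁻¹' {2 * (k : ℤ) + 1}) =
      ENNReal.ofReal (u ^ (2 * k + 1) - u ^ (2 * k + 2)) := by
    rw [Int.preimage_floor_singleton, expMeasure_Ico hc (by positivity) (by positivity),
      ← exp_nat_mul, ← exp_nat_mul]
    push_cast
    ring_nf
  have hpiece_nonneg (k : ℕ) : 0 ≤ u ^ (2 * k + 1) - u ^ (2 * k + 2) :=
    sub_nonneg.2 (pow_le_pow_of_le_one hu0 hu1.le (by omega))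
  have hsum := hasSum_pow_odd_sub_pow_even hu0 hu1
  rw [← measure_inter_conull hneg, setOf_odd_floor_inter_Ici,
    measure_iUnion hdisj fun _ => Int.measurable_floor (measurableSet_singleton _),
    tsum_congr hpiece, ← ENNReal.ofReal_tsum_of_nonneg hpiece_nonneg hsum.summable, hsum.tsum_eq]
  congr 1
  rw [hu, exp_neg]
  field_simp
  ring

theorem binary_digit_of_exponential_bernoulli_general
    {Ω : Type*} [MeasurableSpace Ω] (P : Measure Ω)
    (lam : ℝ) (hlam : 0 < lam) (X : Ω → ℝ)
    (hlaw : P.map X = expMeasure lam) (l : ℤ) :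
    P {ω | Odd ⌊X ω / (2 : ℝ) ^ l⌋} = ENNReal.ofReal (1 / (1 + Real.exp (lam * 2 ^ l))) := by
  have h2l : (0 : ℝ) < 2 ^ l := zpow_pos two_pos l
  have hX : AEMeasurable X P := .of_map_ne_zero <| by
    simpa [hlaw] using (isProbabilityMeasure_expMeasure hlam).ne_zero
  have hodd : MeasurableSet {y : ℝ | Odd ⌊y⌋} :=
    Int.measurable_floor (.of_discrete (s := {n : ℤ | Odd n}))
  calc P {ω | Odd ⌊X ω / (2 : ℝ) ^ l⌋}
      = P.map X ((fun x : ℝ => x / 2 ^ l) ⁻¹' {y | Odd ⌊y⌋}) := by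
        rw [Measure.map_apply_of_aemeasurable hX (hodd.preimage (by fun_prop))]; rfl
    _ = (expMeasure lam).map (· / 2 ^ l) {y | Odd ⌊y⌋} := by
        rw [hlaw, Measure.map_apply (by fun_prop) hodd]
    _ = ENNReal.ofReal (1 / (1 + exp (lam * 2 ^ l))) := by
        rw [expMeasure_map_div_const hlam h2l, expMeasure_setOf_odd_floor (mul_pos hlam h2l)]

/-- If `X` is exponentially distributed with rate `λ`, then for every `l : ℤ` the `l`-th binary
digit of `X` (i.e. the parity of `⌊X / 2^l⌋`) is Bernoulli with parameter
`1 / (1 + exp (λ 2^l))`. -/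
theorem binary_digit_of_exponential_bernoulli
    {Ω : Type*} [MeasurableSpace Ω] (P : Measure Ω) [IsProbabilityMeasure P]
    (lam : ℝ) (hlam : 0 < lam) (X : Ω → ℝ) (hX : Measurable X)
    (hlaw : P.map X = expMeasure lam) (l : ℤ) :
    P {ω | Odd ⌊X ω / (2 : ℝ) ^ l⌋} = ENNReal.ofReal (1 / (1 + Real.exp (lam * 2 ^ l))) :=
  binary_digit_of_exponential_bernoulli_general P lam hlam X hlaw l
end

section
/- Let λ > 0 and let X be a random variable whose law is the exponential distribution with rate λ. Then the family of binary-digit random variables (b_l(X))_{l ∈ ℤ}, where b_l(x) = ⌊x/2^l⌋ mod 2, is mutually independent. -/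
/-! Memorylessness: on each fiber `{⌊x / T⌋ = n}` the exponential law is the translate by `n T`
of its restriction to `[0, T)`, scaled by `exp (-r n T)`. Hence `⌊X / T⌋` is independent of every
event invariant under translation by `T`. The digits below `L` are `2 ^ L`-periodic functions of
`x`, while digit `L` is a function of `⌊x / 2 ^ L⌋`, so the top digit of any finite family splits
off as an independent factor. -/

open MeasureTheory ProbabilityTheory Set Function Real
open scoped ENNReal

theorem measure_preimage_inter_eq_mul_of_fibers {α ι : Type*} [MeasurableSpace α]
    [MeasurableSpace ι] [MeasurableSingletonClass ι] [Countable ι] {μ : Measure α}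
    [IsProbabilityMeasure μ] {N : α → ι} (hN : Measurable N) {A : Set α} (w : ι → ℝ≥0∞)
    {a u : ℝ≥0∞} (hfib_inter : ∀ n, μ (N ⁻¹' {n} ∩ A) = w n * a)
    (hfib : ∀ n, μ (N ⁻¹' {n}) = w n * u) (W : Set ι) :
    μ (N ⁻¹' W ∩ A) = μ (N ⁻¹' W) * μ A := by
  have tsum_fibers : ∀ V : Set ι, ∀ ν : Measure α,
      ν (N ⁻¹' V) = ∑' n : V, ν (N ⁻¹' {(n : ι)}) := fun V ν =>
    (tsum_measure_preimage_singleton V.to_countable fun n _ => hN (measurableSet_singleton n)).symm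
  have restrict_fibers : ∀ V : Set ι, μ (N ⁻¹' V ∩ A) = (∑' n : V, w n) * a := fun V => by
    rw [← Measure.restrict_apply (hN V.to_countable.measurableSet), tsum_fibers,
      ← ENNReal.tsum_mul_right]
    simp only [Measure.restrict_apply (hN (measurableSet_singleton _)), hfib_inter]
  have hW : μ (N ⁻¹' W) = (∑' n : W, w n) * u := by
    rw [tsum_fibers, ← ENNReal.tsum_mul_right]
    simp only [hfib]
  have hA : μ A = (∑' n, w n) * a := by
    rw [← tsum_univ, ← restrict_fibers, preimage_univ, univ_inter]
  have hone : (∑' n, w n) * u = 1 := by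
    rw [← tsum_univ, ← ENNReal.tsum_mul_right]
    simp only [← hfib]
    rw [← tsum_fibers, preimage_univ, measure_univ]
  calc μ (N ⁻¹' W ∩ A) = (∑' n : W, w n) * a * ((∑' n, w n) * u) := by
        rw [restrict_fibers, hone, mul_one]
    _ = μ (N ⁻¹' W) * μ A := by rw [hW, hA]; ring

theorem ProbabilityTheory.iIndepFun.of_map {Ω α ι : Type*} {β : ι → Type*} [MeasurableSpace Ω]
    [MeasurableSpace α] [∀ i, MeasurableSpace (β i)] {μ : Measure Ω} {X : Ω → α} (hX : Measurable X)
    {f : ∀ i, α → β i} (hf : ∀ i, Measurable (f i)) (h : iIndepFun f (μ.map X)) :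
    iIndepFun (fun i => f i ∘ X) μ := by
  rw [iIndepFun_iff_measure_inter_preimage_eq_mul] at h ⊢
  intro S sets hsets
  have hmeas : ∀ i ∈ S, MeasurableSet (f i ⁻¹' sets i) := fun i hi => hf i (hsets i hi)
  simp only [preimage_comp, ← preimage_iInter₂]
  rw [← Measure.map_apply hX (S.measurableSet_biInter hmeas), h S hsets]
  exact Finset.prod_congr rfl fun i hi => Measure.map_apply hX (hmeas i hi)

lemma expMeasure_Iio_zero (r : ℝ) : expMeasure r (Iio 0) = 0 := by
  rw [expMeasure, gammaMeasure, withDensity_apply _ measurableSet_Iio]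
  exact lintegral_exponentialPDF_of_nonpos le_rfl

lemma exponentialPDF_add_of_nonneg {r x c : ℝ} (hx : 0 ≤ x) (hc : 0 ≤ c) :
    exponentialPDF r (x + c) = ENNReal.ofReal (exp (-(r * c))) * exponentialPDF r x := by
  rw [exponentialPDF_of_nonneg (add_nonneg hx hc), exponentialPDF_of_nonneg hx,
    ← ENNReal.ofReal_mul (exp_nonneg _), mul_left_comm, ← exp_add]
  ring_nf

lemma expMeasure_preimage_sub (r : ℝ) {c : ℝ} (hc : 0 ≤ c) {B : Set ℝ} (hB : MeasurableSet B)
    (hB0 : B ⊆ Ici 0) :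
    expMeasure r ((· - c) ⁻¹' B) = ENNReal.ofReal (exp (-(r * c))) * expMeasure r B := by
  have hpdf : Measurable (exponentialPDF r) := (measurable_exponentialPDFReal r).ennreal_ofReal
  rw [show expMeasure r = volume.withDensity (exponentialPDF r) from rfl,
    withDensity_apply _ (hB.preimage (measurable_sub_const c)), withDensity_apply _ hB,
    ← lintegral_const_mul _ hpdf]
  calc ∫⁻ x in (· - c) ⁻¹' B, exponentialPDF r x
      = ∫⁻ x in (· - c) ⁻¹' B, exponentialPDF r ((x - c) + c) := by simp only [sub_add_cancel]
    _ = ∫⁻ y in B, exponentialPDF r (y + c) :=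
      (measurePreserving_sub_right volume c).setLIntegral_comp_preimage hB
        (hpdf.comp (measurable_add_const c))
    _ = _ := setLIntegral_congr_fun hB fun y hy => exponentialPDF_add_of_nonneg (hB0 hy) hc

lemma floor_div_preimage_singleton_inter {T : ℝ} (hT : T ≠ 0) {A : Set ℝ}
    (hA : Periodic (· ∈ A) T) (n : ℤ) :
    (fun x => ⌊x / T⌋) ⁻¹' {n} ∩ A = (· - n * T) ⁻¹' ((fun x => ⌊x / T⌋) ⁻¹' {0} ∩ A) := by
  ext x
  have hfloor : ⌊(x - n * T) / T⌋ = ⌊x / T⌋ - n := by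
    rw [sub_div, mul_div_cancel_right₀ _ hT, Int.floor_sub_intCast]
  simp only [mem_inter_iff, mem_preimage, mem_singleton_iff, hfloor, sub_eq_zero,
    hA.sub_int_mul_eq n]

lemma expMeasure_floor_div_preimage_singleton_inter (r : ℝ) {T : ℝ} (hT : 0 < T) {A : Set ℝ}
    (hAm : MeasurableSet A) (hA : Periodic (· ∈ A) T) (n : ℤ) :
    expMeasure r ((fun x => ⌊x / T⌋) ⁻¹' {n} ∩ A) =
      (if 0 ≤ n then ENNReal.ofReal (exp (-(r * (n * T)))) else 0) *
        expMeasure r ((fun x => ⌊x / T⌋) ⁻¹' {0} ∩ A) := by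
  split_ifs with hn
  · have hfiber : MeasurableSet ((fun x => ⌊x / T⌋) ⁻¹' {0}) :=
      (Int.measurable_floor.comp (measurable_div_const T)) (measurableSet_singleton 0)
    have hnonneg : (fun x => ⌊x / T⌋) ⁻¹' {0} ∩ A ⊆ Ici 0 := fun x hx => by
      simpa using (le_div_iff₀ hT).mp (Int.floor_eq_zero_iff.mp hx.1).1
    rw [floor_div_preimage_singleton_inter hT.ne' hA,
      expMeasure_preimage_sub r (by positivity) (hfiber.inter hAm) hnonneg]
  · refine (measure_mono_null (fun x hx => ?_) (expMeasure_Iio_zero r)).trans (zero_mul _).symm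
    have hfloor : ⌊x / T⌋ < 0 := (show ⌊x / T⌋ = n from hx.1) ▸ not_le.mp hn
    simpa using (div_lt_iff₀ hT).mp (Int.floor_lt.mp hfloor)

theorem expMeasure_floor_div_preimage_inter_of_periodic {r : ℝ} (hr : 0 < r) {T : ℝ}
    (hT : 0 < T) {A : Set ℝ} (hAm : MeasurableSet A) (hA : Periodic (· ∈ A) T) (W : Set ℤ) :
    expMeasure r ((fun x => ⌊x / T⌋) ⁻¹' W ∩ A) =
      expMeasure r ((fun x => ⌊x / T⌋) ⁻¹' W) * expMeasure r A := by
  have := isProbabilityMeasure_expMeasure hr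
  refine measure_preimage_inter_eq_mul_of_fibers (by fun_prop) _
    (u := expMeasure r ((fun x => ⌊x / T⌋) ⁻¹' {0}))
    (expMeasure_floor_div_preimage_singleton_inter r hT hAm hA) (fun n => ?_) W
  simpa only [inter_univ] using
    expMeasure_floor_div_preimage_singleton_inter r hT MeasurableSet.univ (fun _ => rfl) n

noncomputable def binaryDigit (l : ℤ) (x : ℝ) : ℤ := ⌊x / 2 ^ l⌋ % 2

lemma measurable_binaryDigit (l : ℤ) : Measurable (binaryDigit l) := by
  unfold binaryDigit; fun_prop

lemma periodic_binaryDigit {l L : ℤ} (h : l < L) : Periodic (binaryDigit l) (2 ^ L) := by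
  intro x
  obtain ⟨m, rfl⟩ : ∃ m : ℕ, L = l + (m + 1) := ⟨(L - l - 1).toNat, by omega⟩
  have hdiv : (x + 2 ^ (l + (m + 1 : ℕ))) / 2 ^ l = x / 2 ^ l + ((2 * 2 ^ m : ℤ) : ℝ) := by
    rw [zpow_add₀ two_ne_zero, zpow_natCast, add_div, mul_div_cancel_left₀ _ (by positivity)]
    push_cast; ring
  rw [binaryDigit, binaryDigit, show l + (m + 1 : ℤ) = l + (m + 1 : ℕ) by push_cast; rfl,
    hdiv, Int.floor_add_intCast, Int.add_mul_emod_self_left]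

lemma periodic_mem_biInter_preimage_binaryDigit {S : Finset ℤ} {L : ℤ} (hS : ∀ l ∈ S, l < L)
    (V : ℤ → Set ℤ) : Periodic (· ∈ ⋂ l ∈ S, binaryDigit l ⁻¹' V l) (2 ^ L) := fun x => by
  simp only [mem_iInter₂, mem_preimage]
  exact propext <| forall₂_congr fun l hl => by rw [periodic_binaryDigit (hS l hl)]

theorem expMeasure_biInter_preimage_binaryDigit {r : ℝ} (hr : 0 < r) (S : Finset ℤ)
    (V : ℤ → Set ℤ) :
    expMeasure r (⋂ l ∈ S, binaryDigit l ⁻¹' V l) =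
      ∏ l ∈ S, expMeasure r (binaryDigit l ⁻¹' V l) := by
  induction S using Finset.induction_on_max with
  | empty =>
    have := isProbabilityMeasure_expMeasure hr
    simp
  | insert L S hS ih =>
    rw [Finset.set_biInter_insert, Finset.prod_insert fun h => (hS L h).false, ← ih]
    exact expMeasure_floor_div_preimage_inter_of_periodic hr (by positivity)
      (S.measurableSet_biInter fun l _ => measurable_binaryDigit l .of_discrete)
      (periodic_mem_biInter_preimage_binaryDigit hS V) {n | n % 2 ∈ V L}

theorem iIndepFun_binaryDigit_expMeasure {r : ℝ} (hr : 0 < r) :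
    iIndepFun binaryDigit (expMeasure r) :=
  iIndepFun_iff_measure_inter_preimage_eq_mul.mpr fun S V _ =>
    expMeasure_biInter_preimage_binaryDigit hr S V

theorem binary_digits_of_exponential_indep_general
    {Ω : Type*} [MeasurableSpace Ω] (P : Measure Ω)
    (lam : ℝ) (hlam : 0 < lam) (X : Ω → ℝ) (hX : Measurable X)
    (hlaw : P.map X = expMeasure lam) :
    iIndepFun
      (fun (l : ℤ) (ω : Ω) => ⌊X ω / (2 : ℝ) ^ l⌋ % 2) P :=
  iIndepFun.of_map hX measurable_binaryDigit (hlaw ▸ iIndepFun_binaryDigit_expMeasure hlam)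

/-- If `X` is exponentially distributed with rate `λ`, then the family of its binary digits
`b_l(X) = ⌊X / 2^l⌋ % 2`, indexed by `l : ℤ`, is mutually independent. -/
theorem binary_digits_of_exponential_indep
    {Ω : Type*} [MeasurableSpace Ω] (P : Measure Ω) [IsProbabilityMeasure P]
    (lam : ℝ) (hlam : 0 < lam) (X : Ω → ℝ) (hX : Measurable X)
    (hlaw : P.map X = expMeasure lam) :
    iIndepFun
      (fun (l : ℤ) (ω : Ω) => ⌊X ω / (2 : ℝ) ^ l⌋ % 2) P :=
  binary_digits_of_exponential_indep_general P lam hlam X hX hlaw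
end

section
/- For every λ > 0, the family l ↦ 2^l/(1 + e^{λ·2^l}) indexed by l ∈ ℤ is summable, and Σ_{l ∈ ℤ} 2^l/(1 + e^{λ·2^l}) = 1/λ. (That is, the mean of the binary expansion with Bernoulli digit parameters a_l = 1/(1+e^{λ·2^l}) equals the exponential mean 1/λ.) -/
/-!
With `ψ y = y / (exp y - 1)` and `t = exp y`, the identity `1/(t - 1) - 2/(t^2 - 1) = 1/(t + 1)`
makes the terms telescope: `2^l / (1 + exp (λ 2^l)) = (ψ (λ 2^l) - ψ (λ 2^(l+1))) / λ`.
Since `ψ → 1` at `0` and `ψ → 0` at `+∞`, the sum over `ℤ` is `(1 - 0) / λ`.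
-/

open Filter Real Topology

lemma hasSum_sub_succ_of_antitone_nat {g : ℕ → ℝ} {b : ℝ} (hg : Antitone g)
    (hb : Tendsto g atTop (𝓝 b)) : HasSum (fun n => g n - g (n + 1)) (g 0 - b) := by
  rw [hasSum_iff_tendsto_nat_of_nonneg (fun n => sub_nonneg.2 (hg n.le_succ))]
  simpa only [Finset.sum_range_sub'] using tendsto_const_nhds.sub hb

lemma hasSum_sub_succ_of_antitone_int {g : ℤ → ℝ} {a b : ℝ} (hg : Antitone g)
    (ha : Tendsto g atBot (𝓝 a)) (hb : Tendsto g atTop (𝓝 b)) :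
    HasSum (fun n => g n - g (n + 1)) (a - b) := by
  have hpos : HasSum (fun n : ℕ => g n - g (n + 1)) (g 0 - b) :=
    hasSum_sub_succ_of_antitone_nat (fun m n h => hg (by exact_mod_cast h))
      (hb.comp tendsto_natCast_atTop_atTop)
  have hneg : HasSum (fun n : ℕ => -g (-n) - -g (-(n + 1 : ℕ))) (-g 0 - -a) := by
    refine hasSum_sub_succ_of_antitone_nat (fun m n h => neg_le_neg (hg ?_)) ?_
    · simpa using h
    · simpa using (ha.comp (tendsto_neg_atTop_atBot.comp tendsto_natCast_atTop_atTop)).neg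
  have hsum := hpos.of_nat_of_neg_add_one (f := fun n => g n - g (n + 1))
    (hneg.congr_fun fun n => ?_)
  · convert hsum using 1
    ring
  · push_cast
    ring_nf

lemma tendsto_zpow_atTop_atTop_of_one_lt {b : ℝ} (hb : 1 < b) :
    Tendsto (fun l : ℤ => b ^ l) atTop atTop := by
  simpa [Function.comp_def] using
    (tendsto_rpow_atTop_of_base_gt_one b hb).comp tendsto_intCast_atTop_atTop

lemma tendsto_zpow_atBot_nhds_zero_of_one_lt {b : ℝ} (hb : 1 < b) :
    Tendsto (fun l : ℤ => b ^ l) atBot (𝓝 0) := by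
  simpa [Function.comp_def] using
    (tendsto_rpow_atBot_of_base_gt_one b hb).comp (tendsto_intCast_atBot_iff.2 tendsto_id)

lemma div_exp_sub_one_sub_two_mul {y : ℝ} (hy : y ≠ 0) :
    y / (exp y - 1) - 2 * y / (exp (2 * y) - 1) = y / (1 + exp y) := by
  have h1 : exp y - 1 ≠ 0 := sub_ne_zero.2 (mt (exp_eq_one_iff y).1 hy)
  have h2 : exp (2 * y) - 1 = (exp y - 1) * (1 + exp y) := by
    rw [two_mul, exp_add]
    ring
  rw [h2]
  field_simp
  ring

lemma tendsto_div_exp_sub_one_nhdsNE_zero :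
    Tendsto (fun y => y / (exp y - 1)) (𝓝[≠] 0) (𝓝 1) := by
  have hslope := hasDerivAt_iff_tendsto_slope.mp (hasDerivAt_exp 0)
  simpa [slope_def_field, inv_div] using hslope.inv₀ (by simp)

lemma tendsto_div_exp_sub_one_atTop :
    Tendsto (fun y => y / (exp y - 1)) atTop (𝓝 0) := by
  have : Tendsto (fun y => exp y / y - y⁻¹) atTop atTop :=
    (tendsto_exp_div_pow_atTop 1).congr (by simp) |>.atTop_add tendsto_inv_atTop_zero.neg
  refine this.inv_tendsto_atTop.congr' ?_
  filter_upwards [eventually_gt_atTop 0] with y hy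
  simp only [Pi.inv_apply]
  field_simp

/-- The mean of the binary expansion with Bernoulli digit parameters
`a_l = 1 / (1 + exp (λ 2^l))` equals the exponential mean `1/λ`: the family
`l ↦ 2^l / (1 + exp (λ 2^l))` indexed by `l : ℤ` is summable with sum `1/λ`. -/
theorem binary_expansion_mean (lam : ℝ) (hlam : 0 < lam) :
    Summable (fun l : ℤ => (2 : ℝ) ^ l / (1 + Real.exp (lam * 2 ^ l))) ∧
      ∑' l : ℤ, (2 : ℝ) ^ l / (1 + Real.exp (lam * 2 ^ l)) = 1 / lam := by
  set ψ : ℝ → ℝ := fun y => y / (exp y - 1)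
  have hterm (l : ℤ) : (2 : ℝ) ^ l / (1 + exp (lam * 2 ^ l)) =
      (ψ (lam * 2 ^ l) - ψ (lam * 2 ^ (l + 1))) / lam := by
    have hdouble : lam * 2 ^ (l + 1) = 2 * (lam * 2 ^ l) := by
      rw [zpow_add_one₀ two_ne_zero]
      ring
    simp only [ψ, hdouble, div_exp_sub_one_sub_two_mul (by positivity : lam * 2 ^ l ≠ 0)]
    field_simp
  have hanti : Antitone fun l : ℤ => ψ (lam * 2 ^ l) := by
    refine antitone_int_of_succ_le fun l => sub_nonneg.1 ?_
    have := hterm l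
    rw [eq_div_iff hlam.ne'] at this
    rw [← this]
    positivity
  have hbot : Tendsto (fun l : ℤ => ψ (lam * 2 ^ l)) atBot (𝓝 1) := by
    refine tendsto_div_exp_sub_one_nhdsNE_zero.comp <|
      tendsto_nhdsWithin_of_tendsto_nhds_of_eventually_within _ ?_ (.of_forall fun l => ?_)
    · simpa using (tendsto_zpow_atBot_nhds_zero_of_one_lt one_lt_two).const_mul lam
    · exact (by positivity : lam * (2 : ℝ) ^ l ≠ 0)
  have htop : Tendsto (fun l : ℤ => ψ (lam * 2 ^ l)) atTop (𝓝 0) :=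
    tendsto_div_exp_sub_one_atTop.comp
      ((tendsto_zpow_atTop_atTop_of_one_lt one_lt_two).const_mul_atTop hlam)
  have hsum : HasSum (fun l : ℤ => (2 : ℝ) ^ l / (1 + exp (lam * 2 ^ l))) (1 / lam) := by
    simpa only [hterm, sub_zero] using
      (hasSum_sub_succ_of_antitone_int hanti hbot htop).div_const lam
  exact ⟨hsum.summable, hsum.tsum_eq⟩
end
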